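/- arXiv:2103.01412 — 3 statements merged into one kernel-verified Lean document; each statement's English description precedes it below -/
import Mathlib

section
/- For integers q, m, r with 0 ≤ r ≤ m < q, the alternating sum ∑_{k=r}^{m} C(q,k)·C(k,k-r)·(-1)^{k-r} equals ((-1)^{m-r}·(m-r+1)/(q-r))·C(q,m+1)·C(m+1,m-r+1). -/
/-!
Since `C(q,k)·C(k,r) = C(q,r)·C(q-r,k-r)`, the sum is `C(q,r)` times a partial alternating sum
of the row `q - r` of Pascal's triangle, which telescopes by Pascal's rule to
`(-1)^(m-r)·C(q-r-1, m-r)`. Absorption `(q-r)·C(q-r-1, m-r) = (m-r+1)·C(q-r, m-r+1)` and the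
trinomial revision, read backwards, turn this into the stated closed form.
-/

open Finset

theorem sum_Icc_choose_mul_choose_sub_neg_one_pow {R : Type*} [CommRing R] (q m r : ℕ) :
    ∑ k ∈ Icc r m, (q.choose k : R) * (k.choose (k - r) : R) * (-1 : R) ^ (k - r)
      = q.choose r * ∑ j ∈ range (m + 1 - r), (-1 : R) ^ j * ((q - r).choose j : R) := by
  rw [← Ico_add_one_right_eq_Icc, sum_Ico_eq_sum_range, mul_sum]
  refine sum_congr rfl fun j _ => ?_
  have hsymm : (r + j).choose (r + j - r) = (r + j).choose r := by
    rw [Nat.add_sub_cancel_left, Nat.choose_symm_add]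
  rw [hsymm, Nat.add_sub_cancel_left, ← Nat.cast_mul, Nat.choose_mul (Nat.le_add_right r j),
    Nat.add_sub_cancel_left]
  push_cast
  ring

theorem alternating_sum_range_choose_eq_choose {R : Type*} [CommRing R] (n m : ℕ) :
    ∑ k ∈ range (m + 1), (-1 : R) ^ k * ((n + 1).choose k : R) = (-1 : R) ^ m * n.choose m := by
  exact_mod_cast congrArg (Int.cast : ℤ → R) Int.alternating_sum_range_choose_eq_choose

theorem sub_mul_choose_mul_choose_eq {q m r : ℕ} (hrm : r ≤ m) (hmq : m < q) :
    (q - r) * (q.choose r * (q - r - 1).choose (m - r))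
      = (m - r + 1) * (q.choose (m + 1) * (m + 1).choose (m - r + 1)) := by
  have habsorb :
      (q - r) * (q - r - 1).choose (m - r) = (q - r).choose (m - r + 1) * (m - r + 1) := by
    obtain ⟨p, hp⟩ : ∃ p, q - r = p + 1 := ⟨q - r - 1, by omega⟩
    rw [hp, Nat.add_sub_cancel]
    exact Nat.add_one_mul_choose_eq p (m - r)
  rw [Nat.choose_symm_of_eq_add (by omega : m + 1 = (m - r + 1) + r),
    Nat.choose_mul (by omega : r ≤ m + 1), show m + 1 - r = m - r + 1 by omega,
    Nat.mul_left_comm, habsorb]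
  ring

/-- For integers `0 ≤ r ≤ m < q`, the alternating sum
`∑_{k=r}^{m} C(q,k)·C(k,k-r)·(-1)^{k-r}` equals
`((-1)^{m-r}·(m-r+1)/(q-r))·C(q,m+1)·C(m+1,m-r+1)` in `ℚ`. -/
theorem sign_test_alternating_binomial_sum (q m r : ℕ) (hrm : r ≤ m) (hmq : m < q) :
    ∑ k ∈ Finset.Icc r m, (q.choose k : ℚ) * (k.choose (k - r) : ℚ) * (-1 : ℚ) ^ (k - r)
      = ((-1 : ℚ) ^ (m - r) * ((m : ℚ) - r + 1) / ((q : ℚ) - r)) *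
          (q.choose (m + 1) : ℚ) * ((m + 1).choose (m - r + 1) : ℚ) := by
  have hqr : q - r = (q - r - 1) + 1 := by omega
  rw [sum_Icc_choose_mul_choose_sub_neg_one_pow, show m + 1 - r = m - r + 1 by omega, hqr,
    alternating_sum_range_choose_eq_choose]
  have hident := congrArg (Nat.cast : ℕ → ℚ) (sub_mul_choose_mul_choose_eq hrm hmq)
  push_cast [Nat.cast_sub hrm, Nat.cast_sub (hrm.trans hmq.le)] at hident
  have hqr_ne : (q : ℚ) - r ≠ 0 := sub_ne_zero.mpr (by exact_mod_cast (hrm.trans_lt hmq).ne')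
  field_simp
  linear_combination hident
end

section
/- For q independent events with probabilities p_1,...,p_q, define G_m(p) = ∑_{r=0}^{m} P(r), where P(r) = probability that exactly r or exactly q-r events occur, and assume q ≥ 2m+1. Then the partial derivative ∂G_m/∂p_j = ∑_{c∈C([q]\{j},q-m-1)} ∏_{i∈c}p_i ∏_{i∉c}(1-p_i) − ∑_{c∈C([q]\{j},m)} ∏_{i∈c}p_i ∏_{i∉c}(1-p_i), i.e., the sum over r telescopes. -/
/-!
Write `B_s(p, k)` for the probability that exactly `k` of the independent events indexed by `s`
occur, so that `P(r) = B(q - r) + B(r)`. Conditioning on event `j` shows that `B_s` is affine in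
`p j`, with slope `B_{s∖j}(p, k - 1) - B_{s∖j}(p, k)` (no first term when `k = 0`). Summed over
`r ≤ m`, the slopes of both `B(r)` and `B(q - r)` telescope, and the leftover `B_{s∖j}(p, q)`
vanishes because `s∖j` has only `q - 1` elements.
-/

namespace Finset

variable {ι : Type*} [DecidableEq ι] {s t : Finset ι} {j : ι}

noncomputable def poissonBinomial (s : Finset ι) (p : ι → ℝ) (k : ℕ) : ℝ :=
  ∑ c ∈ s.powersetCard k, (∏ i ∈ c, p i) * ∏ i ∈ s \ c, (1 - p i)

theorem poissonBinomial_eq_zero_of_card_lt (p : ι → ℝ) {k : ℕ}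
    (h : s.card < k) : poissonBinomial s p k = 0 := by
  rw [poissonBinomial, powersetCard_eq_empty.mpr h, sum_empty]

theorem poissonBinomial_congr {p p' : ι → ℝ} (h : ∀ i ∈ s, p i = p' i)
    (k : ℕ) : poissonBinomial s p k = poissonBinomial s p' k := by
  refine sum_congr rfl fun c hc => ?_
  have hcs := (mem_powersetCard.mp hc).1
  rw [prod_congr rfl fun i hi => h i (hcs hi),
    prod_congr rfl fun i hi => congrArg (1 - ·) (h i (mem_sdiff.mp hi).1)]

theorem poissonBinomial_insert_zero (hj : j ∉ t) (p : ι → ℝ) :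
    poissonBinomial (insert j t) p 0 = (1 - p j) * poissonBinomial t p 0 := by
  simp [poissonBinomial, prod_insert hj]

theorem poissonBinomial_insert_succ (hj : j ∉ t) (p : ι → ℝ) (k : ℕ) :
    poissonBinomial (insert j t) p (k + 1) =
      p j * poissonBinomial t p k + (1 - p j) * poissonBinomial t p (k + 1) := by
  have hdisj : Disjoint (t.powersetCard (k + 1)) ((t.powersetCard k).image (insert j)) := by
    refine disjoint_left.mpr fun c hc hc' => ?_
    obtain ⟨d, -, rfl⟩ := mem_image.mp hc'
    exact hj ((mem_powersetCard.mp hc).1 (mem_insert_self j d))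
  have hinj : Set.InjOn (insert j) (t.powersetCard k : Set (Finset ι)) := fun c hc d hd hcd => by
    have hjc : j ∉ c := fun h => hj ((mem_powersetCard.mp hc).1 h)
    have hjd : j ∉ d := fun h => hj ((mem_powersetCard.mp hd).1 h)
    rw [← erase_insert hjc, ← erase_insert hjd, hcd]
  rw [poissonBinomial, powersetCard_succ_insert hj, sum_union hdisj, sum_image hinj, add_comm,
    poissonBinomial, poissonBinomial, mul_sum, mul_sum]
  congr 1
  · refine sum_congr rfl fun c hc => ?_
    have hjc : j ∉ c := fun h => hj ((mem_powersetCard.mp hc).1 h)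
    rw [prod_insert hjc, insert_sdiff_insert, sdiff_insert_of_notMem hj]
    ring
  · refine sum_congr rfl fun c hc => ?_
    have hjc : j ∉ c := fun h => hj ((mem_powersetCard.mp hc).1 h)
    rw [insert_sdiff_of_notMem _ hjc, prod_insert fun h => hj (mem_sdiff.mp h).1]
    ring

theorem poissonBinomial_update_of_notMem (hj : j ∉ s) (p : ι → ℝ)
    (x : ℝ) (k : ℕ) : poissonBinomial s (Function.update p j x) k = poissonBinomial s p k :=
  poissonBinomial_congr (fun _ hi => Function.update_of_ne (ne_of_mem_of_not_mem hi hj) _ _) k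

theorem hasDerivAt_poissonBinomial_update_zero (hj : j ∈ s) (p : ι → ℝ) (y : ℝ) :
    HasDerivAt (fun x => poissonBinomial s (Function.update p j x) 0)
      (-poissonBinomial (s.erase j) p 0) y := by
  obtain ⟨t, hjt, rfl⟩ : ∃ t, j ∉ t ∧ s = insert j t :=
    ⟨s.erase j, notMem_erase j s, (insert_erase hj).symm⟩
  simp only [poissonBinomial_insert_zero hjt, Function.update_self,
    poissonBinomial_update_of_notMem hjt, erase_insert hjt]
  have hd : HasDerivAt (fun x => (1 - x) * poissonBinomial t p 0)
      ((0 - 1) * poissonBinomial t p 0) y :=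
    ((hasDerivAt_const y 1).sub (hasDerivAt_id y)).mul_const _
  simpa using hd

theorem hasDerivAt_poissonBinomial_update_succ (hj : j ∈ s) (p : ι → ℝ) (k : ℕ) (y : ℝ) :
    HasDerivAt (fun x => poissonBinomial s (Function.update p j x) (k + 1))
      (poissonBinomial (s.erase j) p k - poissonBinomial (s.erase j) p (k + 1)) y := by
  obtain ⟨t, hjt, rfl⟩ : ∃ t, j ∉ t ∧ s = insert j t :=
    ⟨s.erase j, notMem_erase j s, (insert_erase hj).symm⟩
  simp only [poissonBinomial_insert_succ hjt, Function.update_self,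
    poissonBinomial_update_of_notMem hjt, erase_insert hjt]
  have hd : HasDerivAt (fun x => x * poissonBinomial t p k + (1 - x) * poissonBinomial t p (k + 1))
      (1 * poissonBinomial t p k + (0 - 1) * poissonBinomial t p (k + 1)) y :=
    ((hasDerivAt_id y).mul_const _).add (((hasDerivAt_const y 1).sub (hasDerivAt_id y)).mul_const _)
  convert hd using 1
  ring

theorem hasDerivAt_sum_poissonBinomial_update_symm (hj : j ∈ s) (p : ι → ℝ) {m : ℕ}
    (hm : m < s.card) (y : ℝ) :
    HasDerivAt (fun x => ∑ r ∈ range (m + 1),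
        (poissonBinomial s (Function.update p j x) (s.card - r) +
          poissonBinomial s (Function.update p j x) r))
      (poissonBinomial (s.erase j) p (s.card - m - 1) - poissonBinomial (s.erase j) p m) y := by
  induction m with
  | zero =>
    obtain ⟨n, hn⟩ : ∃ n, s.card = n + 1 := ⟨s.card - 1, by omega⟩
    have htop : poissonBinomial (s.erase j) p (n + 1) = 0 :=
      poissonBinomial_eq_zero_of_card_lt p (by rw [card_erase_of_mem hj]; omega)
    simp only [zero_add, sum_range_one, Nat.sub_zero, hn, Nat.add_sub_cancel]
    refine ((hasDerivAt_poissonBinomial_update_succ hj p n y).add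
      (hasDerivAt_poissonBinomial_update_zero hj p y)).congr_deriv ?_
    rw [htop]
    ring
  | succ m ih =>
    obtain ⟨n, hn⟩ : ∃ n, s.card - (m + 1) = n + 1 := ⟨s.card - (m + 1) - 1, by omega⟩
    simp only [sum_range_succ _ (m + 1), hn, Nat.add_sub_cancel]
    refine ((ih (by omega)).add ((hasDerivAt_poissonBinomial_update_succ hj p n y).add
      (hasDerivAt_poissonBinomial_update_succ hj p m y))).congr_deriv ?_
    rw [show s.card - m - 1 = n + 1 by omega]
    ring

end Finset

open Finset

/-- For `q ≥ 2m+1` and `j ∈ [q]`, the function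
`G_m(p) = ∑_{r=0}^{m} P(r)`, where
`P(r) = ∑_{c∈C([q],q-r)} ∏_{i∈c}p_i ∏_{i∉c}(1-p_i) + ∑_{c∈C([q],r)} ∏_{i∈c}p_i ∏_{i∉c}(1-p_i)`,
has partial derivative with respect to `p_j` equal to the telescoped difference
`∑_{c∈C([q]\{j},q-m-1)} ∏_{i∈c}p_i ∏_{i∉c}(1-p_i) − ∑_{c∈C([q]\{j},m)} ∏_{i∈c}p_i ∏_{i∉c}(1-p_i)`
(in the latter sums, complements are taken within `[q]\{j}`). -/
theorem sign_test_partial_derivative_telescopes (q m : ℕ) (hqm : 2 * m + 1 ≤ q)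
    (j : Fin q) (p : Fin q → ℝ) :
    HasDerivAt (fun x : ℝ => ∑ r ∈ Finset.range (m + 1),
        ((∑ c ∈ Finset.powersetCard (q - r) (Finset.univ : Finset (Fin q)),
            (∏ i ∈ c, Function.update p j x i) * ∏ i ∈ cᶜ, (1 - Function.update p j x i))
          + ∑ c ∈ Finset.powersetCard r (Finset.univ : Finset (Fin q)),
            (∏ i ∈ c, Function.update p j x i) * ∏ i ∈ cᶜ, (1 - Function.update p j x i)))
      ((∑ c ∈ (Finset.univ.erase j).powersetCard (q - m - 1),
          (∏ i ∈ c, p i) * ∏ i ∈ (Finset.univ.erase j) \ c, (1 - p i))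
        - ∑ c ∈ (Finset.univ.erase j).powersetCard m,
          (∏ i ∈ c, p i) * ∏ i ∈ (Finset.univ.erase j) \ c, (1 - p i))
      (p j) := by
  have h := hasDerivAt_sum_poissonBinomial_update_symm (mem_univ j) p
    (m := m) (by rw [card_fin]; omega) (p j)
  simpa only [card_fin, poissonBinomial, ← compl_eq_univ_sdiff] using h
end

section
/- Let q ≥ 3, m with q ≥ 2m+2, ρ ∈ (0,1), and γ ∈ (0,1]. Under the minimal-correlation normal model (only coordinates 1 and 2 correlated with correlation ρ), the quantity ∑_{r=0}^{m-1} P_{q,ρ}(r) + γ·P_{q,ρ}(m) is strictly greater than its value at ρ = 0, where P_{q,ρ}(r) is the probability that exactly r or exactly q−r coordinates are positive. -/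
/-!
Split the number of positive coordinates as `X + Z`, where `X ∈ {0, 1, 2}` counts the positive
signs among the two correlated coordinates and `Z ~ Bin(q - 2, 1/2)` counts the others,
independently of `X`. With `p j = P(X = j)` and `b` the `Bin(q - 2, 1/2)` weights,
`P(X + Z = r) = ∑ j, p j * b (r - j)`, and the symmetry of `b` gives
`P_q(r) = 2 b(r - 1) + (1 - p 1) Δ²b(r)`: the model enters only through the probability `p 1`
that the two signs disagree. The second differences telescope, so the size is a constant plus
`(1 - p 1) ((1 - γ) W(m - 1) + γ W(m))` with `W k = b k - b (k - 1)`, and `W` is nonnegative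
below the mode and positive at `m`. Finally `p 1 = 1/2` for independent coordinates, whereas for
`ρ > 0` each disagreement event of `(ε₁, ρ ε₁ + √(1 - ρ²) ε₂)` lies inside the corresponding
one of `(ε₁, ε₂)`, which has probability `1/4`, and one of them misses a wedge of positive mass.
-/

open MeasureTheory ProbabilityTheory Finset
open scoped NNReal

lemma Nat.choose_lt_choose_succ {n k : ℕ} (h : 2 * k + 1 < n) :
    n.choose k < n.choose (k + 1) := by
  have hpos : 0 < n.choose k := Nat.choose_pos (by omega)
  refine Nat.lt_of_mul_lt_mul_right (a := k + 1) ?_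
  rw [Nat.choose_succ_right_eq]
  exact Nat.mul_lt_mul_of_le_of_lt le_rfl (by omega) hpos

/-- The `Bin(n, 1/2)` weight of `k`, extended by zero to negative `k` so that shifted indices
`k - j` need no case split. -/
noncomputable def binomHalf (n : ℕ) (k : ℤ) : ℝ :=
  if k < 0 then 0 else (n.choose k.toNat : ℝ) / 2 ^ n

namespace binomHalf

variable {n : ℕ}

lemma of_neg {k : ℤ} (hk : k < 0) : binomHalf n k = 0 := if_pos hk

lemma natCast (n k : ℕ) : binomHalf n k = n.choose k / 2 ^ n := by
  simp [binomHalf]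

lemma sub_symm (k : ℤ) : binomHalf n (n - k) = binomHalf n k := by
  rcases lt_or_ge k 0 with hk | hk
  · rw [of_neg hk]
    unfold binomHalf
    rw [if_neg (by omega), Nat.choose_eq_zero_of_lt (by omega), Nat.cast_zero, zero_div]
  obtain ⟨j, rfl⟩ := Int.eq_ofNat_of_zero_le hk
  rcases le_or_gt j n with hj | hj
  · rw [← Nat.cast_sub hj, natCast, natCast, Nat.choose_symm hj]
  · rw [of_neg (by omega), natCast, Nat.choose_eq_zero_of_lt hj, Nat.cast_zero, zero_div]

lemma sub_one_lt {k : ℤ} (hk : 0 ≤ k) (h : 2 * k ≤ n) : binomHalf n (k - 1) < binomHalf n k := by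
  obtain ⟨j, rfl⟩ := Int.eq_ofNat_of_zero_le hk
  rcases j with _ | j
  · rw [of_neg (by omega), natCast, Nat.choose_zero_right]; positivity
  · rw [show ((j + 1 : ℕ) : ℤ) - 1 = j by omega, natCast, natCast]
    gcongr
    exact Nat.choose_lt_choose_succ (by omega)

lemma sub_one_le {k : ℤ} (h : 2 * k ≤ n) : binomHalf n (k - 1) ≤ binomHalf n k := by
  rcases lt_or_ge k 0 with hk | hk
  · rw [of_neg hk, of_neg (by omega)]
  · exact (sub_one_lt hk h).le

end binomHalf

lemma sum_range_second_diff (b : ℤ → ℝ) (m : ℕ) :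
    ∑ r ∈ range m, (b r - 2 * b (r - 1) + b (r - 2)) =
      (b (m - 1) - b (m - 2)) - (b (-1) - b (-2)) := by
  induction m with
  | zero => simp
  | succ m ih =>
    rw [sum_range_succ, ih]
    push_cast
    ring_nf

/-- The law of `X + Z` for `X ∈ {0, 1, 2}` with masses `p` and an independent
`Z ~ Bin(n, 1/2)`. -/
noncomputable def convBinomHalf (n : ℕ) (p : ℕ → ℝ) (r : ℤ) : ℝ :=
  ∑ j ∈ range 3, p j * binomHalf n (r - j)

lemma convBinomHalf_add_reflect {n : ℕ} {p : ℕ → ℝ} (hp : ∑ j ∈ range 3, p j = 1) (r : ℤ) :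
    convBinomHalf n p r + convBinomHalf n p (n + 2 - r) =
      2 * binomHalf n (r - 1) +
        (1 - p 1) * (binomHalf n r - 2 * binomHalf n (r - 1) + binomHalf n (r - 2)) := by
  have hsymm (j : ℤ) : binomHalf n (n + 2 - r - j) = binomHalf n (r - (2 - j)) := by
    rw [← binomHalf.sub_symm (r - (2 - j))]; ring_nf
  simp only [convBinomHalf, sum_range_succ, sum_range_zero, Nat.cast_ofNat, Nat.cast_one,
    Nat.cast_zero, hsymm] at hp ⊢
  norm_num
  linear_combination (binomHalf n r + binomHalf n (r - 2)) * hp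

/-- The size `∑_{r < m} P_q(r) + γ P_q(m)` of the randomized two-sided sign test, where
`P_q(r) = f r + f (q - r)` and `f r` is the probability of exactly `r` positive coordinates. -/
noncomputable def signTestSize (f : ℕ → ℝ) (q m : ℕ) (γ : ℝ) : ℝ :=
  ∑ r ∈ range m, (f r + f (q - r)) + γ * (f m + f (q - m))

lemma signTestSize_convBinomHalf {n m : ℕ} (hm : m ≤ n + 2) (γ : ℝ) {p : ℕ → ℝ}
    (hp : ∑ j ∈ range 3, p j = 1) :
    signTestSize (fun r ↦ convBinomHalf n p r) (n + 2) m γ =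
      2 * (∑ r ∈ range m, binomHalf n (r - 1) + γ * binomHalf n (m - 1)) +
        (1 - p 1) * ((1 - γ) * (binomHalf n (m - 1) - binomHalf n (m - 2)) +
          γ * (binomHalf n m - binomHalf n (m - 1))) := by
  have hreflect (r : ℕ) (hr : r ≤ m) :
      convBinomHalf n p r + convBinomHalf n p ((n + 2 - r : ℕ) : ℤ) =
        2 * binomHalf n (r - 1) +
          (1 - p 1) * (binomHalf n r - 2 * binomHalf n (r - 1) + binomHalf n (r - 2)) := by
    rw [Nat.cast_sub (by omega), Nat.cast_add, Nat.cast_two]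
    exact convBinomHalf_add_reflect hp r
  have htel := sum_range_second_diff (binomHalf n) m
  rw [binomHalf.of_neg (show (-1 : ℤ) < 0 by norm_num),
    binomHalf.of_neg (show (-2 : ℤ) < 0 by norm_num)] at htel
  unfold signTestSize
  rw [sum_congr rfl fun r hr ↦ hreflect r (mem_range.1 hr).le, hreflect m le_rfl,
    sum_add_distrib, ← mul_sum, ← mul_sum, htel]
  ring

lemma binomHalf_increment_mix_pos {n m : ℕ} (hm : 2 * m ≤ n) {γ : ℝ} (hγ0 : 0 < γ)
    (hγ1 : γ ≤ 1) :
    0 < (1 - γ) * (binomHalf n (m - 1) - binomHalf n (m - 2)) +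
      γ * (binomHalf n m - binomHalf n (m - 1)) := by
  have h1 := binomHalf.sub_one_le (n := n) (k := m - 1) (by omega)
  have h2 := binomHalf.sub_one_lt (n := n) (k := m) (by omega) (by omega)
  rw [sub_sub, one_add_one_eq_two] at h1
  have := mul_nonneg (sub_nonneg.2 hγ1) (sub_nonneg.2 h1)
  have := mul_pos hγ0 (sub_pos.2 h2)
  linarith

lemma signTestSize_convBinomHalf_lt {n m : ℕ} (hm : 2 * m ≤ n) {γ : ℝ} (hγ0 : 0 < γ)
    (hγ1 : γ ≤ 1) {p p' : ℕ → ℝ} (hp : ∑ j ∈ range 3, p j = 1) (hp' : ∑ j ∈ range 3, p' j = 1)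
    (h : p 1 < p' 1) :
    signTestSize (fun r ↦ convBinomHalf n p' r) (n + 2) m γ <
      signTestSize (fun r ↦ convBinomHalf n p r) (n + 2) m γ := by
  rw [signTestSize_convBinomHalf (by omega) γ hp, signTestSize_convBinomHalf (by omega) γ hp']
  have := binomHalf_increment_mix_pos hm hγ0 hγ1
  gcongr

noncomputable def posCount {ι : Type*} [Fintype ι] (x : ι → ℝ) : ℕ := #{i | 0 < x i}

lemma posCount_le {ι : Type*} [Fintype ι] (x : ι → ℝ) : posCount x ≤ Fintype.card ι :=
  card_filter_le _ _

lemma measurable_posCount {ι : Type*} [Fintype ι] : Measurable (posCount : (ι → ℝ) → ℕ) := by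
  have : (posCount : (ι → ℝ) → ℕ) = fun x ↦ ∑ i, if 0 < x i then 1 else 0 :=
    funext fun x ↦ card_filter _ _
  rw [this]
  exact Finset.measurable_sum _ fun i _ ↦
    Measurable.ite (measurableSet_lt measurable_const (measurable_pi_apply i)) measurable_const
      measurable_const

lemma posCount_fin_succ_succ {n : ℕ} (x : Fin (n + 2) → ℝ) :
    posCount x = posCount ![x 0, x 1] + posCount fun i : Fin n ↦ x i.succ.succ := by
  simp only [posCount, card_filter, Fin.sum_univ_succ (n := n + 1), Fin.sum_univ_succ (n := n),
    Fin.sum_univ_two, Fin.succ_zero_eq_one]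
  ac_rfl

lemma posCount_pair_eq_one_iff {x y : ℝ} :
    posCount ![x, y] = 1 ↔ (0 < x ∧ y ≤ 0) ∨ (x ≤ 0 ∧ 0 < y) := by
  simp only [posCount, card_filter, Fin.sum_univ_two, Matrix.cons_val_zero, Matrix.cons_val_one]
  by_cases hx : 0 < x <;> by_cases hy : 0 < y <;> simp [hx, hy] <;> linarith

section Gaussian

variable {v : ℝ≥0}

lemma gaussianReal_real_Ioi_zero (hv : v ≠ 0) : (gaussianReal 0 v).real (Set.Ioi 0) = 1 / 2 := by
  have := nullSingletonClass_gaussianReal (μ := 0) hv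
  have hneg := gaussianReal_map_neg (μ := 0) (v := v)
  rw [neg_zero] at hneg
  have hsymm : (gaussianReal 0 v).real (Set.Iic 0) = (gaussianReal 0 v).real (Set.Ioi 0) := by
    calc (gaussianReal 0 v).real (Set.Iic 0) = (gaussianReal 0 v).real (Set.Iio 0) :=
          (measureReal_congr Iio_ae_eq_Iic).symm
      _ = ((gaussianReal 0 v).map (fun x ↦ -x)).real (Set.Ioi 0) := by
          rw [map_measureReal_apply measurable_neg measurableSet_Ioi]
          congr 1; ext; simp
      _ = (gaussianReal 0 v).real (Set.Ioi 0) := by rw [hneg]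
  have htot := measureReal_add_measureReal_compl (μ := gaussianReal 0 v) (s := Set.Ioi 0)
    measurableSet_Ioi
  rw [Set.compl_Ioi, probReal_univ] at htot
  linarith

lemma gaussianReal_real_Iic_zero (hv : v ≠ 0) : (gaussianReal 0 v).real (Set.Iic 0) = 1 / 2 := by
  rw [← Set.compl_Ioi, probReal_compl_eq_one_sub measurableSet_Ioi, gaussianReal_real_Ioi_zero hv]
  norm_num

lemma gaussianReal_real_Ioo_pos (μ : ℝ) (hv : v ≠ 0) {x y : ℝ} (hxy : x < y) :
    0 < (gaussianReal μ v).real (Set.Ioo x y) := by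
  have := (gaussianReal_absolutelyContinuous' μ hv).isOpenPosMeasure
  exact ENNReal.toReal_pos (isOpen_Ioo.measure_pos _ (Set.nonempty_Ioo.2 hxy)).ne'
    (measure_ne_top _ _)

lemma gaussianReal_real_Ioi_pos (μ : ℝ) (hv : v ≠ 0) (x : ℝ) :
    0 < (gaussianReal μ v).real (Set.Ioi x) := by
  have := (gaussianReal_absolutelyContinuous' μ hv).isOpenPosMeasure
  exact ENNReal.toReal_pos (isOpen_Ioi.measure_pos _ Set.nonempty_Ioi).ne' (measure_ne_top _ _)

end Gaussian

namespace ProbabilityTheory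

variable {Ω : Type*} [MeasurableSpace Ω] {P : Measure Ω}

lemma IndepFun.measureReal_inter_preimage_eq_mul {β β' : Type*} [MeasurableSpace β]
    [MeasurableSpace β'] {X : Ω → β} {Z : Ω → β'} (h : IndepFun X Z P) {S : Set β} {T : Set β'}
    (hS : MeasurableSet S) (hT : MeasurableSet T) :
    P.real (X ⁻¹' S ∩ Z ⁻¹' T) = P.real (X ⁻¹' S) * P.real (Z ⁻¹' T) := by
  simp only [measureReal_def, h.measure_inter_preimage_eq_mul _ _ hS hT, ENNReal.toReal_mul]

lemma IndepFun.measureReal_add_eq_sum [IsFiniteMeasure P] {X Z : Ω → ℕ} (h : IndepFun X Z P)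
    (hX : Measurable X) (hZ : Measurable Z) {s : Finset ℕ} (hs : ∀ ω, X ω ∈ s) (r : ℕ) :
    P.real {ω | X ω + Z ω = r} = ∑ j ∈ s, P.real {ω | X ω = j} * P.real {ω | j + Z ω = r} := by
  have hset : {ω | X ω + Z ω = r} = ⋃ j ∈ s, X ⁻¹' {j} ∩ Z ⁻¹' {z | j + z = r} := by
    ext ω
    simp only [Set.mem_ofPred_eq, Set.mem_iUnion, Set.mem_inter_iff, Set.mem_preimage,
      Set.mem_singleton_iff, exists_prop]
    exact ⟨fun h ↦ ⟨X ω, hs ω, rfl, h⟩, by rintro ⟨j, -, rfl, h⟩; exact h⟩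
  rw [hset, measureReal_biUnion_finset]
  · refine sum_congr rfl fun j _ ↦ ?_
    exact h.measureReal_inter_preimage_eq_mul (measurableSet_singleton j) .of_discrete
  · intro i _ j _ hij
    exact Set.disjoint_left.2 fun ω hi hj ↦ hij (hi.1.symm.trans hj.1)
  · exact fun j _ ↦ (hX (measurableSet_singleton j)).inter (hZ .of_discrete)

lemma sum_measureReal_eq_one [IsProbabilityMeasure P] {X : Ω → ℕ} (hX : Measurable X)
    {s : Finset ℕ} (hs : ∀ ω, X ω ∈ s) : ∑ j ∈ s, P.real {ω | X ω = j} = 1 := by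
  change ∑ j ∈ s, P.real (X ⁻¹' {j}) = 1
  rw [sum_measureReal_preimage_singleton s fun j _ ↦ hX (measurableSet_singleton j)]
  rw [show X ⁻¹' s = Set.univ from Set.eq_univ_of_forall hs, probReal_univ]

lemma iIndepFun.measureReal_posCount_eq_binomial [IsProbabilityMeasure P] {ι : Type*}
    [Fintype ι] [DecidableEq ι] {η : ι → Ω → ℝ} (h : iIndepFun η P)
    (hmeas : ∀ i, Measurable (η i)) {p : ℝ}
    (hp : ∀ i, P.real {ω | 0 < η i ω} = p) (k : ℕ) :
    P.real {ω | posCount (η · ω) = k} =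
      (Fintype.card ι).choose k * p ^ k * (1 - p) ^ (Fintype.card ι - k) := by
  let sign (A : Finset ι) (i : ι) : Set ℝ := if i ∈ A then Set.Ioi 0 else Set.Iic 0
  have hsign (A : Finset ι) (i : ι) : MeasurableSet (sign A i) := by
    unfold sign; split_ifs
    exacts [measurableSet_Ioi, measurableSet_Iic]
  have hfiber (A : Finset ι) (ω : Ω) :
      ω ∈ ⋂ i ∈ (univ : Finset ι), η i ⁻¹' sign A i ↔ ({i | 0 < η i ω} : Finset ι) = A := by
    simp only [Set.mem_iInter, Set.mem_preimage, mem_univ, forall_const, Finset.ext_iff,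
      mem_filter, true_and, sign]
    refine forall_congr' fun i ↦ ?_
    split_ifs with hi <;> simp [hi]
  have hset : {ω | posCount (η · ω) = k} =
      ⋃ A ∈ powersetCard k (univ : Finset ι), ⋂ i ∈ (univ : Finset ι), η i ⁻¹' sign A i := by
    ext ω
    simp only [Set.mem_ofPred_eq, Set.mem_iUnion, hfiber, mem_powersetCard, subset_univ, true_and,
      exists_prop, exists_eq_right', posCount]
  have hprob (A : Finset ι) :
      P.real (⋂ i ∈ (univ : Finset ι), η i ⁻¹' sign A i) = p ^ #A * (1 - p) ^ #Aᶜ := by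
    rw [measureReal_def, h.measure_inter_preimage_eq_mul _ fun i _ ↦ hsign A i,
      ENNReal.toReal_prod]
    have hfactor (i : ι) : (P (η i ⁻¹' sign A i)).toReal = if i ∈ A then p else 1 - p := by
      rw [← measureReal_def, ← hp i]
      unfold sign
      split_ifs
      · rfl
      · rw [← Set.compl_Ioi, Set.preimage_compl]
        exact probReal_compl_eq_one_sub (hmeas i measurableSet_Ioi)
    rw [prod_congr rfl fun i _ ↦ hfactor i, prod_ite, prod_const, prod_const]
    congr 2 <;> simp [Finset.compl_eq_univ_sdiff, Finset.filter_not]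
  rw [hset, measureReal_biUnion_finset]
  · rw [sum_congr rfl fun A hA ↦ by rw [hprob A, card_compl, (mem_powersetCard.1 hA).2],
      sum_const, card_powersetCard, card_univ, nsmul_eq_mul, mul_assoc]
  · intro A _ B _ hAB
    exact Set.disjoint_left.2 fun ω hA hB ↦
      hAB (((hfiber A ω).1 hA).symm.trans ((hfiber B ω).1 hB))
  · exact fun A _ ↦ .biInter (Set.to_countable _) fun i _ ↦ hmeas i (hsign A i)

lemma iIndepFun.measureReal_posCount_eq_binomHalf [IsProbabilityMeasure P] {ι : Type*}
    [Fintype ι] [DecidableEq ι] {η : ι → Ω → ℝ} (h : iIndepFun η P) (hmeas : ∀ i, Measurable (η i))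
    (hhalf : ∀ i, P.real {ω | 0 < η i ω} = 1 / 2) (k : ℤ) :
    P.real {ω | (posCount (η · ω) : ℤ) = k} = binomHalf (Fintype.card ι) k := by
  rcases lt_or_ge k 0 with hk | hk
  · rw [binomHalf.of_neg hk, show {ω | (posCount (η · ω) : ℤ) = k} = ∅ by ext; simp; omega,
      measureReal_empty]
  obtain ⟨j, rfl⟩ := Int.eq_ofNat_of_zero_le hk
  simp only [Nat.cast_inj]
  rw [h.measureReal_posCount_eq_binomial hmeas hhalf, binomHalf.natCast]
  rcases le_or_gt j (Fintype.card ι) with hj | hj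
  · rw [show (1 : ℝ) - 1 / 2 = 1 / 2 by norm_num, mul_assoc, ← pow_add, Nat.add_sub_cancel' hj,
      one_div_pow, mul_one_div]
  · rw [Nat.choose_eq_zero_of_lt hj]; simp

lemma iIndepFun.indepFun_fin_pair_tail {β : Type*} [MeasurableSpace β] {n : ℕ}
    {ε : Fin (n + 2) → Ω → β} (h : iIndepFun ε P) (hmeas : ∀ i, Measurable (ε i)) :
    IndepFun (fun ω ↦ (ε 0 ω, ε 1 ω)) (fun ω (i : Fin n) ↦ ε i.succ.succ ω) P := by
  let S : Finset (Fin (n + 2)) := {0, 1}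
  let T : Finset (Fin (n + 2)) := univ.image fun i : Fin n ↦ i.succ.succ
  have hST : Disjoint S T := by
    simp only [S, T, disjoint_left, mem_insert, mem_singleton, mem_image, mem_univ, true_and]
    rintro _ h0 ⟨i, rfl⟩
    simp only [Fin.ext_iff, Fin.val_succ, Fin.val_zero, Fin.val_one] at h0
    omega
  exact (h.indepFun_finset S T hST hmeas).comp
    (φ := fun x : S → β ↦ (x ⟨0, by simp [S]⟩, x ⟨1, by simp [S]⟩))
    (ψ := fun (x : T → β) (i : Fin n) ↦ x ⟨i.succ.succ, by simp [T]⟩) (by fun_prop) (by fun_prop)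

lemma sum_measureReal_posCount_pair [IsProbabilityMeasure P] {U V : Ω → ℝ} (hU : Measurable U)
    (hV : Measurable V) : ∑ j ∈ range 3, P.real {ω | posCount ![U ω, V ω] = j} = 1 :=
  sum_measureReal_eq_one (measurable_posCount.comp (by fun_prop))
    fun ω ↦ mem_range.2 (Nat.lt_succ_of_le (posCount_le _))

lemma measureReal_posCount_pair_eq_one [IsFiniteMeasure P] {U V : Ω → ℝ} (hU : Measurable U)
    (hV : Measurable V) :
    P.real {ω | posCount ![U ω, V ω] = 1} =
      P.real {ω | 0 < U ω ∧ V ω ≤ 0} + P.real {ω | U ω ≤ 0 ∧ 0 < V ω} := by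
  simp_rw [posCount_pair_eq_one_iff, Set.ofPred_or]
  refine measureReal_union (Set.disjoint_left.2 fun ω h h' ↦ (not_lt.2 h'.1) h.1) ?_
  exact (measurableSet_le hU measurable_const).inter (measurableSet_lt measurable_const hV)

theorem measureReal_posCount_eq_convBinomHalf [IsProbabilityMeasure P] {n : ℕ}
    {ε : Fin (n + 2) → Ω → ℝ} (hmeas : ∀ i, Measurable (ε i)) (hindep : iIndepFun ε P)
    (hhalf : ∀ i : Fin n, P.real {ω | 0 < ε i.succ.succ ω} = 1 / 2)
    {Y : Fin (n + 2) → Ω → ℝ} {g : ℝ × ℝ → ℝ × ℝ} (hg : Measurable g)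
    (hY₀₁ : ∀ ω, (Y 0 ω, Y 1 ω) = g (ε 0 ω, ε 1 ω))
    (hY : ∀ (i : Fin n) ω, Y i.succ.succ ω = ε i.succ.succ ω) (r : ℕ) :
    P.real {ω | posCount (Y · ω) = r} =
      convBinomHalf n (fun j ↦ P.real {ω | posCount ![Y 0 ω, Y 1 ω] = j}) r := by
  let pairCount (x : ℝ × ℝ) : ℕ := posCount ![(g x).1, (g x).2]
  have hpair : Measurable pairCount := measurable_posCount.comp (by fun_prop)
  let X ω := pairCount (ε 0 ω, ε 1 ω)
  let Z ω := posCount fun i : Fin n ↦ ε i.succ.succ ω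
  have hX (ω : Ω) : X ω = posCount ![Y 0 ω, Y 1 ω] := by simp only [X, pairCount, ← hY₀₁]
  have hcount (ω : Ω) : posCount (Y · ω) = X ω + Z ω := by
    rw [posCount_fin_succ_succ, hX]
    simp only [hY, Z]
  have hXZ : IndepFun X Z P :=
    (hindep.indepFun_fin_pair_tail hmeas).comp hpair measurable_posCount
  have hXmeas : Measurable X := hpair.comp ((hmeas 0).prodMk (hmeas 1))
  have hZmeas : Measurable Z :=
    measurable_posCount.comp (measurable_pi_lambda _ fun i ↦ hmeas _)
  have hZlaw (k : ℤ) : P.real {ω | (Z ω : ℤ) = k} = binomHalf n k := by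
    simpa using (hindep.precomp ((Fin.succ_injective _).comp (Fin.succ_injective _))
      ).measureReal_posCount_eq_binomHalf (fun i ↦ hmeas _) hhalf k
  simp_rw [hcount, hXZ.measureReal_add_eq_sum hXmeas hZmeas (s := range 3)
    (fun ω ↦ mem_range.2 (Nat.lt_succ_of_le (posCount_le _))), convBinomHalf, ← hZlaw, hX]
  refine sum_congr rfl fun j _ ↦ ?_
  congr 2
  ext ω
  simp only [Set.mem_ofPred_eq]
  omega

section SignDisagreement

variable {a b : Ω → ℝ}

lemma measureReal_preimage_of_gaussian (ha : Measurable a) (hla : P.map a = gaussianReal 0 1)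
    {S : Set ℝ} (hS : MeasurableSet S) : P.real (a ⁻¹' S) = (gaussianReal 0 1).real S := by
  rw [← hla, map_measureReal_apply ha hS]

lemma measureReal_pos_of_gaussian (ha : Measurable a) (hla : P.map a = gaussianReal 0 1) :
    P.real {ω | 0 < a ω} = 1 / 2 := by
  rw [show {ω | 0 < a ω} = a ⁻¹' Set.Ioi 0 from rfl, measureReal_preimage_of_gaussian ha hla
    measurableSet_Ioi, gaussianReal_real_Ioi_zero one_ne_zero]

lemma measureReal_pos_and_nonpos_of_gaussian (hab : IndepFun a b P) (ha : Measurable a)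
    (hb : Measurable b) (hla : P.map a = gaussianReal 0 1) (hlb : P.map b = gaussianReal 0 1) :
    P.real {ω | 0 < a ω ∧ b ω ≤ 0} = 1 / 4 := by
  rw [show {ω | 0 < a ω ∧ b ω ≤ 0} = a ⁻¹' Set.Ioi 0 ∩ b ⁻¹' Set.Iic 0 from rfl,
    hab.measureReal_inter_preimage_eq_mul measurableSet_Ioi measurableSet_Iic,
    measureReal_preimage_of_gaussian ha hla measurableSet_Ioi,
    measureReal_preimage_of_gaussian hb hlb measurableSet_Iic,
    gaussianReal_real_Ioi_zero one_ne_zero, gaussianReal_real_Iic_zero one_ne_zero]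
  norm_num

lemma measureReal_sign_disagree_of_gaussian (hab : IndepFun a b P) (ha : Measurable a)
    (hb : Measurable b) (hla : P.map a = gaussianReal 0 1) (hlb : P.map b = gaussianReal 0 1) :
    P.real {ω | 0 < a ω ∧ b ω ≤ 0} + P.real {ω | a ω ≤ 0 ∧ 0 < b ω} = 1 / 2 := by
  rw [show {ω | a ω ≤ 0 ∧ 0 < b ω} = {ω | 0 < b ω ∧ a ω ≤ 0} from Set.ext fun _ ↦ and_comm,
    measureReal_pos_and_nonpos_of_gaussian hab ha hb hla hlb,
    measureReal_pos_and_nonpos_of_gaussian hab.symm hb ha hlb hla]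
  norm_num

lemma measureReal_sign_disagree_lt_of_gaussian [IsFiniteMeasure P] (hab : IndepFun a b P)
    (ha : Measurable a) (hb : Measurable b) (hla : P.map a = gaussianReal 0 1)
    (hlb : P.map b = gaussianReal 0 1) {ρ c : ℝ} (hρ : 0 < ρ) (hc : 0 < c) :
    P.real {ω | 0 < a ω ∧ ρ * a ω + c * b ω ≤ 0} + P.real {ω | a ω ≤ 0 ∧ 0 < ρ * a ω + c * b ω}
      < 1 / 2 := by
  have hquarter := measureReal_pos_and_nonpos_of_gaussian hab ha hb hla hlb
  have hquarter' := measureReal_pos_and_nonpos_of_gaussian hab.symm hb ha hlb hla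
  -- a wedge of positive mass where `a > 0`, `b ≤ 0` but `ρ a + c b > 0`
  let R := a ⁻¹' Set.Ioi 1 ∩ b ⁻¹' Set.Ioo (-(ρ / c)) 0
  have hR : 0 < P.real R := by
    rw [hab.measureReal_inter_preimage_eq_mul measurableSet_Ioi measurableSet_Ioo,
      measureReal_preimage_of_gaussian ha hla measurableSet_Ioi,
      measureReal_preimage_of_gaussian hb hlb measurableSet_Ioo]
    exact mul_pos (gaussianReal_real_Ioi_pos 0 one_ne_zero 1)
      (gaussianReal_real_Ioo_pos 0 one_ne_zero (by simp [div_pos hρ hc]))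
  have hwedge : P.real {ω | 0 < a ω ∧ ρ * a ω + c * b ω ≤ 0} + P.real R ≤
      P.real {ω | 0 < a ω ∧ b ω ≤ 0} := by
    rw [← measureReal_union _ ((ha measurableSet_Ioi).inter (hb measurableSet_Ioo))]
    · refine measureReal_mono ?_
      rintro ω (⟨h1, h2⟩ | ⟨h1, h2, h3⟩)
      · exact ⟨h1, by nlinarith⟩
      · exact ⟨lt_trans one_pos h1, h3.le⟩
    · refine Set.disjoint_left.2 fun ω ⟨_, h⟩ ⟨h1, h2, _⟩ ↦ ?_
      have hcb : -ρ < c * b ω :=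
        calc -ρ = c * -(ρ / c) := by field_simp
          _ < c * b ω := mul_lt_mul_of_pos_left h2 hc
      have hρa : ρ * 1 < ρ * a ω := mul_lt_mul_of_pos_left h1 hρ
      linarith
  have hother : P.real {ω | a ω ≤ 0 ∧ 0 < ρ * a ω + c * b ω} ≤ P.real {ω | 0 < b ω ∧ a ω ≤ 0} :=
    measureReal_mono fun ω ⟨h1, h2⟩ ↦ ⟨by nlinarith, h1⟩
  linarith

end SignDisagreement

end ProbabilityTheory

/-- Under the minimal-correlation normal model (only coordinates 1 and 2 correlated,
with correlation `ρ ∈ (0,1)`; realized from i.i.d. standard normals `ε` via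
`Y_1 = ε_1`, `Y_2 = s·ε_1 + √(1-s²)·ε_2`, `Y_i = ε_i` otherwise, at `s = ρ` and
`s = 0`), for `q ≥ 3`, `q ≥ 2m+2` and `γ ∈ (0,1]`, the quantity
`∑_{r=0}^{m-1} P_{q,ρ}(r) + γ·P_{q,ρ}(m)` is strictly greater than its value at
`ρ = 0`, where `P_{q,s}(r)` is the probability that exactly `r` or exactly `q−r`
coordinates are positive. -/
theorem minimal_correlation_size_distortion {Ω : Type*} [MeasurableSpace Ω]
    (P : Measure Ω) [IsProbabilityMeasure P] (q m : ℕ)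
    (hm : 2 * m + 2 ≤ q) (ρ γ : ℝ) (hρ0 : 0 < ρ) (hρ1 : ρ < 1)
    (hγ0 : 0 < γ) (hγ1 : γ ≤ 1)
    (ε : Fin q → Ω → ℝ) (hmeas : ∀ i, Measurable (ε i))
    (hindep : iIndepFun ε P)
    (hgauss : ∀ i, Measure.map (ε i) P = gaussianReal 0 1)
    (Yρ Y0 : Fin q → Ω → ℝ)
    (hYρ : ∀ i ω, Yρ i ω =
      if (i : ℕ) = 0 then ε ⟨0, by omega⟩ ω
      else if (i : ℕ) = 1 then ρ * ε ⟨0, by omega⟩ ω + Real.sqrt (1 - ρ ^ 2) * ε ⟨1, by omega⟩ ω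
      else ε i ω)
    (hY0 : ∀ i ω, Y0 i ω = ε i ω) :
    (∑ r ∈ Finset.range m,
        ((P {ω | (Finset.univ.filter (fun i => 0 < Y0 i ω)).card = r}).toReal
          + (P {ω | (Finset.univ.filter (fun i => 0 < Y0 i ω)).card = q - r}).toReal))
      + γ * ((P {ω | (Finset.univ.filter (fun i => 0 < Y0 i ω)).card = m}).toReal
          + (P {ω | (Finset.univ.filter (fun i => 0 < Y0 i ω)).card = q - m}).toReal)
    < (∑ r ∈ Finset.range m,
        ((P {ω | (Finset.univ.filter (fun i => 0 < Yρ i ω)).card = r}).toReal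
          + (P {ω | (Finset.univ.filter (fun i => 0 < Yρ i ω)).card = q - r}).toReal))
      + γ * ((P {ω | (Finset.univ.filter (fun i => 0 < Yρ i ω)).card = m}).toReal
          + (P {ω | (Finset.univ.filter (fun i => 0 < Yρ i ω)).card = q - m}).toReal) := by
  obtain ⟨n, rfl⟩ : ∃ n, q = n + 2 := ⟨q - 2, by omega⟩
  set c := √(1 - ρ ^ 2)
  have hc : 0 < c := Real.sqrt_pos.2 (by nlinarith)
  have hYρ₀ : Yρ 0 = ε 0 := funext fun ω ↦ by simp [hYρ]
  have hYρ₁ : Yρ 1 = fun ω ↦ ρ * ε 0 ω + c * ε 1 ω := funext fun ω ↦ by simp [hYρ, c]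
  have hY0₀₁ : Y0 0 = ε 0 ∧ Y0 1 = ε 1 := ⟨funext (hY0 0), funext (hY0 1)⟩
  have hhalf (i : Fin n) := measureReal_pos_of_gaussian (hmeas i.succ.succ) (hgauss _)
  have hlawρ := measureReal_posCount_eq_convBinomHalf hmeas hindep hhalf (Y := Yρ)
    (g := fun x ↦ (x.1, ρ * x.1 + c * x.2)) (by fun_prop) (by simp [hYρ₀, hYρ₁]) (by simp [hYρ])
  have hlaw0 := measureReal_posCount_eq_convBinomHalf hmeas hindep hhalf (Y := Y0) measurable_id
    (by simp [hY0]) (by simp [hY0])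
  change signTestSize (fun r ↦ P.real {ω | posCount (Y0 · ω) = r}) (n + 2) m γ <
    signTestSize (fun r ↦ P.real {ω | posCount (Yρ · ω) = r}) (n + 2) m γ
  simp only [hlawρ, hlaw0, hYρ₀, hYρ₁, hY0₀₁]
  refine signTestSize_convBinomHalf_lt (by omega) hγ0 hγ1
    (sum_measureReal_posCount_pair (hmeas 0) (by fun_prop))
    (sum_measureReal_posCount_pair (hmeas 0) (hmeas 1)) ?_
  have hab : IndepFun (ε 0) (ε 1) P := hindep.indepFun (by simp)
  rw [measureReal_posCount_pair_eq_one (hmeas 0) (by fun_prop),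
    measureReal_posCount_pair_eq_one (hmeas 0) (hmeas 1),
    measureReal_sign_disagree_of_gaussian hab (hmeas 0) (hmeas 1) (hgauss 0) (hgauss 1)]
  exact measureReal_sign_disagree_lt_of_gaussian hab (hmeas 0) (hmeas 1) (hgauss 0) (hgauss 1)
    hρ0 hc
end
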